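/- arXiv:2010.02958 — 2 statements merged into one kernel-verified Lean document; each statement's English description precedes it below -/
import Mathlib

section
/- Let ζ₉ be a primitive ninth root of unity. The elements u₁ := ζ₉ - ζ₉² - ζ₉⁵ and u₂ := 1 - ζ₉⁴ - ζ₉⁵ lie in Q(ζ₉)⁺, are algebraic units in its ring of integers, and satisfy u₁ ≥ 1 and u₂ ≥ 1 (in the real embedding given by ζ₉ = exp(2πi/9)). -/
/-!
Put `c = 2 cos(π/9)`; the triple-angle formula gives `c³ = 3c + 1`. Pairing each power of
`ζ = ζ₉` with its inverse (using `ζ⁻¹ = ζ⁸ = -ζ² - ζ⁵`, as `1 + ζ³ + ζ⁶ = 0`) gives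
`u₁ = ζ + ζ⁻¹ = 2 cos(2π/9) = c² - 2` and `u₂ = 1 - (ζ⁴ + ζ⁻⁴) = 1 - 2 cos(8π/9) = 1 + c`.
So both are real elements of `ℚ(c)`, integral because `c` is, and units because the cubic
relation produces integral inverses `(c² - 2)⁻¹ = c² - c - 1` and `(1 + c)⁻¹ = 2 + c - c²`.
Finally `c > √3` since `π/9 < π/6`, whence `u₁, u₂ > 1`.
-/

noncomputable section

/-- `ζ₉ = exp(2πi/9)`. -/
def z9 : ℂ := Complex.exp (2 * Real.pi * Complex.I / 9)

/-- The totally real cubic field `Q(ζ₉)⁺ = Q(2cos(π/9))`, as a subfield of `ℂ`. -/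
def Kplus : IntermediateField ℚ ℂ :=
  IntermediateField.adjoin ℚ {((2 * Real.cos (Real.pi / 9) : ℝ) : ℂ)}

def u1 : ℂ := z9 - z9 ^ 2 - z9 ^ 5

def u2 : ℂ := 1 - z9 ^ 4 - z9 ^ 5

open Complex Polynomial
open scoped Real

theorem isIntegral_of_cube_eq {A : Type*} [CommRing A] {c : A} (hc : c ^ 3 = 3 * c + 1) :
    IsIntegral ℤ c :=
  ⟨X ^ 3 - C 3 * X - 1, by monicity!, by simp [hc]⟩

section CubicUnit

variable {K : Type*} [Field K] {c : K}

theorem isIntegral_sq_sub_two_of_cube_eq (hc : c ^ 3 = 3 * c + 1) :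
    IsIntegral ℤ (c ^ 2 - 2) ∧ IsIntegral ℤ (c ^ 2 - 2)⁻¹ := by
  have hcℤ := isIntegral_of_cube_eq hc
  have h2ℤ : IsIntegral ℤ (2 : K) := mod_cast isIntegral_natCast 2
  rw [inv_eq_of_mul_eq_one_right (b := c ^ 2 - c - 1) (by linear_combination (c - 1) * hc)]
  exact ⟨(hcℤ.pow 2).sub h2ℤ, ((hcℤ.pow 2).sub hcℤ).sub isIntegral_one⟩

theorem isIntegral_one_add_of_cube_eq (hc : c ^ 3 = 3 * c + 1) :
    IsIntegral ℤ (1 + c) ∧ IsIntegral ℤ (1 + c)⁻¹ := by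
  have hcℤ := isIntegral_of_cube_eq hc
  have h2ℤ : IsIntegral ℤ (2 : K) := mod_cast isIntegral_natCast 2
  rw [inv_eq_of_mul_eq_one_right (b := 2 + c - c ^ 2) (by linear_combination -hc)]
  exact ⟨isIntegral_one.add hcℤ, (h2ℤ.add hcℤ).sub (hcℤ.pow 2)⟩

end CubicUnit

theorem exp_mul_I_add_inv (φ : ℝ) : exp (φ * I) + (exp (φ * I))⁻¹ = (2 * Real.cos φ : ℝ) := by
  rw [← exp_neg, ← neg_mul]
  push_cast
  rw [two_cos]

def c9 : ℝ := 2 * Real.cos (π / 9)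

theorem c9_cube : c9 ^ 3 = 3 * c9 + 1 := by
  have h := Real.cos_three_mul (π / 9)
  rw [show 3 * (π / 9) = π / 3 by ring, Real.cos_pi_div_three] at h
  unfold c9
  linear_combination -2 * h

theorem sqrt_three_lt_c9 : √3 < c9 := by
  have h := Real.cos_lt_cos_of_nonneg_of_le_pi (by positivity : 0 ≤ π / 9)
    (by linarith [Real.pi_pos] : π / 6 ≤ π) (by linarith [Real.pi_pos] : π / 9 < π / 6)
  rw [Real.cos_pi_div_six] at h
  unfold c9
  linarith

theorem ofReal_c9_mem_Kplus : (c9 : ℂ) ∈ Kplus :=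
  IntermediateField.mem_adjoin_simple_self ℚ (c9 : ℂ)

theorem z9_pow (n : ℕ) : z9 ^ n = exp ((n * (2 * π / 9) : ℝ) * I) := by
  rw [z9, ← exp_nat_mul]
  push_cast
  ring_nf

theorem isPrimitiveRoot_z9 : IsPrimitiveRoot z9 9 := by
  simpa [z9] using isPrimitiveRoot_exp 9 (by norm_num)

theorem z9_pow_add_inv (n : ℕ) : z9 ^ n + (z9 ^ n)⁻¹ = (2 * Real.cos (n * (2 * π / 9)) : ℝ) := by
  rw [z9_pow, exp_mul_I_add_inv]

theorem u1_eq : u1 = (c9 ^ 2 - 2 : ℝ) := by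
  have h9 := isPrimitiveRoot_z9
  have hcube_root : 1 + z9 ^ 3 + (z9 ^ 3) ^ 2 = 0 := by
    simpa [Finset.sum_range_succ] using
      (h9.pow_of_dvd (p := 3) (by norm_num) (by norm_num)).geom_sum_eq_zero
  have hinv : z9⁻¹ = -z9 ^ 2 - z9 ^ 5 :=
    inv_eq_of_mul_eq_one_right (by linear_combination -hcube_root)
  have := z9_pow_add_inv 1
  rw [pow_one, hinv, Nat.cast_one, one_mul, show 2 * π / 9 = 2 * (π / 9) by ring,
    Real.cos_two_mul] at this
  rw [u1, c9]
  push_cast at *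
  linear_combination this

theorem u2_eq : u2 = (1 + c9 : ℝ) := by
  have hinv : (z9 ^ 4)⁻¹ = z9 ^ 5 :=
    inv_eq_of_mul_eq_one_right (by rw [← pow_add, isPrimitiveRoot_z9.pow_eq_one])
  have := z9_pow_add_inv 4
  rw [hinv, show ((4 : ℕ) : ℝ) * (2 * π / 9) = π - π / 9 by push_cast; ring,
    Real.cos_pi_sub] at this
  rw [u2, c9]
  push_cast at *
  linear_combination -this

/-- `u₁ = ζ₉ - ζ₉² - ζ₉⁵` and `u₂ = 1 - ζ₉⁴ - ζ₉⁵` lie in `Q(ζ₉)⁺`, are algebraic units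
(both they and their inverses are algebraic integers), and are real numbers `≥ 1`. -/
theorem stmt2 :
    u1 ∈ Kplus ∧ u2 ∈ Kplus ∧
    (IsIntegral ℤ u1 ∧ IsIntegral ℤ u1⁻¹) ∧
    (IsIntegral ℤ u2 ∧ IsIntegral ℤ u2⁻¹) ∧
    u1.im = 0 ∧ 1 ≤ u1.re ∧ u2.im = 0 ∧ 1 ≤ u2.re := by
  have hc : (c9 : ℂ) ^ 3 = 3 * c9 + 1 := by exact_mod_cast c9_cube
  have hc_pos : 0 < c9 := (Real.sqrt_nonneg 3).trans_lt sqrt_three_lt_c9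
  have hc_sq : 3 < c9 ^ 2 := (Real.sqrt_lt' hc_pos).1 sqrt_three_lt_c9
  have hcK := ofReal_c9_mem_Kplus
  simp only [u1_eq, u2_eq, ofReal_re, ofReal_im]
  push_cast
  exact ⟨sub_mem (pow_mem hcK 2) (ofNat_mem Kplus 2), add_mem (one_mem Kplus) hcK,
    isIntegral_sq_sub_two_of_cube_eq hc, isIntegral_one_add_of_cube_eq hc,
    trivial, by linarith, trivial, by linarith⟩
end
end

section
/- Let α ∈ O_{Q(ζ₉)⁺} be an algebraic d-number with N_{Q(ζ₉)⁺/Q}(α) = 9. Then α = uβ² for some unit u ∈ O_{Q(ζ₉)⁺}^×, where β = 2 - ζ₉⁴ - ζ₉⁵. -/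
noncomputable section

/-- `x ∈ Q(ζ₉)⁺` is an algebraic unit: both `x` and `x⁻¹` are algebraic integers. -/
def IsUnitInt (x : Kplus) : Prop :=
  IsIntegral ℤ (x : ℂ) ∧ IsIntegral ℤ ((x⁻¹ : Kplus) : ℂ)

/-- `α` is an algebraic d-number in `O_{Q(ζ₉)⁺}`: a nonzero algebraic integer such that
`α/σ(α)` is an algebraic unit for every `σ ∈ Gal(Q(ζ₉)⁺/Q)`. -/
def IsDNumber (α : Kplus) : Prop :=
  α ≠ 0 ∧ IsIntegral ℤ (α : ℂ) ∧
    ∀ σ : Kplus ≃ₐ[ℚ] Kplus, IsUnitInt (α / σ α)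

/-!
Put `θ = 2 cos(π/9)`, a root of the irreducible cubic `X³ - 3X - 1`, so that `Q(ζ₉)⁺ = Q(θ)` is a
cyclic cubic field containing all three roots `θ, θ² - θ - 2, 2 - θ²`, and `β = 2 + θ`. For a
d-number `α` the product of the units `α / σ α` over the Galois group is `α³ / N(α)`, so
`α³ = 9 v` with `v` a unit. On the other hand `β³ w = 3` for the unit `w = 7θ² - 11θ - 4`.
Hence `(α / β²)³ = v w²` is a unit, and so is `α / β²`, since a field element with an integral
power is itself integral.
-/

open Polynomial

theorem Algebra.prod_div_automorphisms {K L : Type*} [Field K] [Field L] [Algebra K L]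
    [FiniteDimensional K L] [IsGalois K L] (x : L) :
    ∏ σ : L ≃ₐ[K] L, x / σ x = x ^ Module.finrank K L / algebraMap K L (Algebra.norm K x) := by
  rw [Finset.prod_div_distrib, Finset.prod_const, Finset.card_univ, ← Nat.card_eq_fintype_card,
    IsGalois.card_aut_eq_finrank, Algebra.norm_eq_prod_automorphisms]

theorem isIntegral_of_pow_three_eq_three_mul_add_one {A : Type*} [CommRing A] {x : A}
    (hx : x ^ 3 = 3 * x + 1) : IsIntegral ℤ x :=
  ⟨X ^ 3 - 3 * X - 1, by monicity!, by
    simp only [eval₂_sub, eval₂_mul, eval₂_X_pow, eval₂_ofNat, eval₂_X, eval₂_one]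
    linear_combination hx⟩

theorem Rat.pow_three_ne_three_mul_add_one (r : ℚ) : r ^ 3 ≠ 3 * r + 1 := by
  intro hr
  obtain ⟨m, rfl⟩ :=
    IsIntegrallyClosed.isIntegral_iff.mp (isIntegral_of_pow_three_eq_three_mul_add_one hr)
  have hm : m * (m ^ 2 - 3) = 1 := by
    have : (m : ℚ) ^ 3 = 3 * m + 1 := hr
    exact_mod_cast (by linear_combination this : (m : ℚ) * (m ^ 2 - 3) = 1)
  rcases Int.eq_one_or_neg_one_of_mul_eq_one hm with rfl | rfl <;> norm_num at hm

theorem two_cos_pi_div_nine_pow_three :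
    (2 * Real.cos (Real.pi / 9)) ^ 3 = 3 * (2 * Real.cos (Real.pi / 9)) + 1 := by
  have h := Real.cos_three_mul (Real.pi / 9)
  rw [show 3 * (Real.pi / 9) = Real.pi / 3 by ring, Real.cos_pi_div_three] at h
  linear_combination -2 * h

theorem z9_pow_four_add_pow_five : z9 ^ 4 + z9 ^ 5 = -(2 * Real.cos (Real.pi / 9) : ℝ) := by
  have hpow : ∀ n : ℕ, z9 ^ n = Complex.exp (n * (2 * Real.pi * Complex.I / 9)) := fun n => by
    rw [z9, ← Complex.exp_nat_mul]
  -- `ζ₉⁴ = -exp(-iπ/9)` and `ζ₉⁵ = -exp(iπ/9)`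
  rw [hpow, hpow,
    show ((4 : ℕ) : ℂ) * (2 * Real.pi * Complex.I / 9) =
      Real.pi * Complex.I + -(Real.pi / 9 : ℝ) * Complex.I by push_cast; ring,
    show ((5 : ℕ) : ℂ) * (2 * Real.pi * Complex.I / 9) =
      Real.pi * Complex.I + (Real.pi / 9 : ℝ) * Complex.I by push_cast; ring,
    Complex.exp_add, Complex.exp_add, Complex.exp_pi_mul_I]
  push_cast
  rw [Complex.two_cos]
  ring

theorem Kplus.isIntegral_coe_iff {x : Kplus} : IsIntegral ℤ (x : ℂ) ↔ IsIntegral ℤ x :=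
  isIntegral_algHom_iff (Kplus.val.restrictScalars ℤ) Subtype.val_injective

theorem isUnitInt_iff {x : Kplus} : IsUnitInt x ↔ IsIntegral ℤ x ∧ IsIntegral ℤ x⁻¹ :=
  and_congr Kplus.isIntegral_coe_iff Kplus.isIntegral_coe_iff

theorem isUnitInt_of_mul_eq_one {x y : Kplus} (hx : IsIntegral ℤ x) (hy : IsIntegral ℤ y)
    (hxy : x * y = 1) : IsUnitInt x :=
  isUnitInt_iff.mpr ⟨hx, inv_eq_of_mul_eq_one_right hxy ▸ hy⟩

namespace IsUnitInt

theorem one : IsUnitInt 1 :=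
  isUnitInt_iff.mpr ⟨isIntegral_one, by rw [inv_one]; exact isIntegral_one⟩

theorem mul {x y : Kplus} (hx : IsUnitInt x) (hy : IsUnitInt y) : IsUnitInt (x * y) := by
  rw [isUnitInt_iff] at *
  exact ⟨hx.1.mul hy.1, mul_inv x y ▸ hx.2.mul hy.2⟩

theorem pow {x : Kplus} (hx : IsUnitInt x) (n : ℕ) : IsUnitInt (x ^ n) := by
  rw [isUnitInt_iff] at *
  exact ⟨hx.1.pow n, inv_pow x n ▸ hx.2.pow n⟩

theorem of_pow {x : Kplus} {n : ℕ} (hn : n ≠ 0) (hx : IsUnitInt (x ^ n)) : IsUnitInt x := by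
  rw [isUnitInt_iff, ← inv_pow] at *
  exact ⟨hx.1.of_pow (Nat.pos_of_ne_zero hn), hx.2.of_pow (Nat.pos_of_ne_zero hn)⟩

theorem prod {ι : Type*} {s : Finset ι} {f : ι → Kplus} (hf : ∀ i ∈ s, IsUnitInt (f i)) :
    IsUnitInt (∏ i ∈ s, f i) :=
  Finset.prod_induction f IsUnitInt (fun _ _ => mul) one hf

end IsUnitInt

namespace Kplus

def gen : Kplus := ⟨_, IntermediateField.mem_adjoin_simple_self ℚ _⟩

theorem coe_gen_pow_three : (gen : ℂ) ^ 3 = 3 * gen + 1 := by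
  change ((2 * Real.cos (Real.pi / 9) : ℝ) : ℂ) ^ 3 = 3 * ((2 * Real.cos (Real.pi / 9) : ℝ) : ℂ) + 1
  exact_mod_cast congrArg Complex.ofReal two_cos_pi_div_nine_pow_three

theorem gen_pow_three : gen ^ 3 = 3 * gen + 1 := by
  apply (algebraMap Kplus ℂ).injective
  simpa only [map_pow, map_add, map_mul, map_ofNat, map_one, IntermediateField.algebraMap_apply]
    using coe_gen_pow_three

def cubic : ℚ[X] := X ^ 3 - 3 * X - 1

theorem cubic_monic : cubic.Monic := by
  unfold cubic; monicity!

theorem cubic_natDegree : cubic.natDegree = 3 := by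
  unfold cubic; compute_degree!

theorem cubic_irreducible : Irreducible cubic := by
  rw [irreducible_iff_roots_eq_zero_of_degree_le_three (by simp [cubic_natDegree])
    (by simp [cubic_natDegree])]
  refine Multiset.eq_zero_of_forall_notMem fun r hr => r.pow_three_ne_three_mul_add_one ?_
  have := (mem_roots cubic_monic.ne_zero).mp hr
  simp only [cubic, IsRoot, eval_sub, eval_mul, eval_pow, eval_X, eval_ofNat, eval_one] at this
  linear_combination this

theorem aeval_gen_cubic : aeval (gen : ℂ) cubic = 0 := by
  simp only [cubic, map_sub, map_mul, map_pow, aeval_X, map_ofNat, map_one]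
  linear_combination coe_gen_pow_three

theorem minpoly_gen : minpoly ℚ (gen : ℂ) = cubic :=
  (minpoly.eq_of_irreducible_of_monic cubic_irreducible aeval_gen_cubic cubic_monic).symm

instance : FiniteDimensional ℚ Kplus :=
  IntermediateField.adjoin.finiteDimensional ⟨cubic, cubic_monic, aeval_gen_cubic⟩

theorem finrank_eq_three : Module.finrank ℚ Kplus = 3 := by
  change Module.finrank ℚ (IntermediateField.adjoin ℚ {(gen : ℂ)}) = 3
  rw [IntermediateField.adjoin.finrank ⟨cubic, cubic_monic, aeval_gen_cubic⟩, minpoly_gen,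
    cubic_natDegree]

theorem cubic_map_eq : cubic.map (algebraMap ℚ Kplus) =
    (X - C gen) * (X - C (gen ^ 2 - gen - 2)) * (X - C (2 - gen ^ 2)) := by
  have h : C gen ^ 3 = 3 * C gen + 1 := by
    simpa only [map_pow, map_add, map_mul, map_ofNat, map_one] using congrArg C gen_pow_three
  simp only [cubic, Polynomial.map_sub, Polynomial.map_mul, Polynomial.map_pow, map_X,
    Polynomial.map_ofNat, Polynomial.map_one, map_sub, map_pow, map_ofNat]
  linear_combination (-(1 - C gen) * X + (-C gen ^ 2 + C gen + 1)) * h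

theorem cubic_splits : (cubic.map (algebraMap ℚ Kplus)).Splits := by
  rw [cubic_map_eq]
  exact ((Splits.X_sub_C _).mul (Splits.X_sub_C _)).mul (Splits.X_sub_C _)

instance : IsSplittingField ℚ Kplus cubic := by
  refine IntermediateField.isSplittingField_iff.mpr ⟨cubic_splits, le_antisymm ?_ ?_⟩
  · refine IntermediateField.adjoin.mono _ _ _ (Set.singleton_subset_iff.mpr ?_)
    exact mem_rootSet.mpr ⟨cubic_monic.ne_zero, aeval_gen_cubic⟩
  · rw [IntermediateField.adjoin_le_iff, ← cubic_splits.image_rootSet Kplus.val]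
    rintro _ ⟨y, -, rfl⟩
    exact y.2

instance : IsGalois ℚ Kplus :=
  IsGalois.of_separable_splitting_field cubic_irreducible.separable

theorem coe_two_add_gen : ((2 + gen : Kplus) : ℂ) = 2 - z9 ^ 4 - z9 ^ 5 := by
  rw [sub_sub, z9_pow_four_add_pow_five, sub_neg_eq_add]
  rfl

theorem isIntegral_quadratic_gen (a b c : ℤ) : IsIntegral ℤ (a * gen ^ 2 + b * gen + c) :=
  have hgen := isIntegral_of_pow_three_eq_three_mul_add_one gen_pow_three
  (((isIntegral_intCast a).mul (hgen.pow 2)).add ((isIntegral_intCast b).mul hgen)).add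
    (isIntegral_intCast c)

theorem exists_isUnitInt_two_add_gen_pow_three_mul_eq_three :
    ∃ w, IsUnitInt w ∧ (2 + gen) ^ 3 * w = 3 := by
  refine ⟨7 * gen ^ 2 - 11 * gen - 4,
    isUnitInt_of_mul_eq_one (y := 2 * gen ^ 2 + 5 * gen + 3) ?_ ?_ ?_, ?_⟩
  · convert isIntegral_quadratic_gen 7 (-11) (-4) using 1
    push_cast
    ring
  · exact_mod_cast isIntegral_quadratic_gen 2 5 3
  · linear_combination (14 * gen + 13) * gen_pow_three
  · linear_combination (7 * gen ^ 2 + 31 * gen + 35) * gen_pow_three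

end Kplus

theorem IsDNumber.exists_pow_three_eq {α : Kplus} (hα : IsDNumber α) :
    ∃ v, IsUnitInt v ∧ α ^ 3 = algebraMap ℚ Kplus (Algebra.norm ℚ α) * v := by
  refine ⟨∏ σ, α / σ α, IsUnitInt.prod fun σ _ => hα.2.2 σ, ?_⟩
  have hN : algebraMap ℚ Kplus (Algebra.norm ℚ α) ≠ 0 :=
    (_root_.map_ne_zero _).mpr (Algebra.norm_ne_zero_iff.mpr hα.1)
  rw [Algebra.prod_div_automorphisms, Kplus.finrank_eq_three, mul_div_cancel₀ _ hN]

/-- An algebraic d-number in `O_{Q(ζ₉)⁺}` of field norm `9` is a unit multiple of the square of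
`β = 2 - ζ₉⁴ - ζ₉⁵`. -/
theorem stmt10 (B α : Kplus) (hB : (B : ℂ) = 2 - z9 ^ 4 - z9 ^ 5)
    (hα : IsDNumber α) (hn : Algebra.norm ℚ α = 9) :
    ∃ u : Kplus, IsUnitInt u ∧ α = u * B ^ 2 := by
  obtain ⟨v, hv, hαv⟩ := hα.exists_pow_three_eq
  rw [hn, map_ofNat] at hαv
  obtain ⟨w, hw, hBw⟩ := Kplus.exists_isUnitInt_two_add_gen_pow_three_mul_eq_three
  rw [← Subtype.ext (hB.trans Kplus.coe_two_add_gen.symm)] at hBw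
  have hB0 : B ≠ 0 := by
    rintro rfl
    norm_num at hBw
  refine ⟨α / B ^ 2, IsUnitInt.of_pow three_ne_zero ?_,
    (div_mul_cancel₀ α (pow_ne_zero 2 hB0)).symm⟩
  have hu : (α / B ^ 2) ^ 3 = v * w ^ 2 := by
    field_simp
    linear_combination hαv - v * (B ^ 3 * w + 3) * hBw
  rw [hu]
  exact hv.mul (hw.pow 2)
end
end
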